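/- Let G be a k-uniform hypergraph with n vertices and energy E(G). Then the Estrada index satisfies EE(G) ≤ n − 1 + e^{E(G)}, and equality holds if and only if G has no edges (G is the edgeless hypergraph on n vertices). -/

import Mathlib

open scoped BigOperators

set_option linter.unusedSectionVars false

section Hyper

variable {V : Type*} [Fintype V] [DecidableEq V]

/-- The adjacency matrix of a hypergraph given by its edge set `E`:
the `(i,j)` entry, for `i ≠ j`, is the number of edges containing both `i` and `j`,
and the diagonal entries are `0`. -/
def adjMatrix (E : Finset (Finset V)) : Matrix V V ℝ :=
  fun i j => if i = j then 0 else ((E.filter fun e => i ∈ e ∧ j ∈ e).card : ℝ)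

theorem adjMatrix_isHermitian (E : Finset (Finset V)) :
    (adjMatrix E).IsHermitian := by
  unfold Matrix.IsHermitian
  ext i j
  simp only [Matrix.conjTranspose_apply, adjMatrix, star_trivial]
  rcases eq_or_ne i j with h | h
  · simp [h]
  · have hfilter : E.filter (fun e => j ∈ e ∧ i ∈ e) = E.filter (fun e => i ∈ e ∧ j ∈ e) :=
      Finset.filter_congr fun e _ => and_comm
    rw [if_neg (Ne.symm h), if_neg h, hfilter]

/-- The Estrada index of a hypergraph: `EE(G) = ∑ᵢ exp (λᵢ)`, the sum over the
eigenvalues (with multiplicity) of the adjacency matrix; equivalently `tr (exp A(G))`. -/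
noncomputable def estradaIndex (E : Finset (Finset V)) : ℝ :=
  ∑ i, Real.exp ((adjMatrix_isHermitian E).eigenvalues i)

/-- The energy of a hypergraph: `∑ᵢ |λᵢ|` over the adjacency eigenvalues. -/
noncomputable def energy (E : Finset (Finset V)) : ℝ :=
  ∑ i, |(adjMatrix_isHermitian E).eigenvalues i|

/-- The degree of a vertex: the number of edges containing it. -/
def degree (E : Finset (Finset V)) (v : V) : ℕ := (E.filter fun e => v ∈ e).card

end Hyper

/-!
Since `(eᵃ - 1)(eᵇ - 1) ≥ 0`, we have `eᵃ + eᵇ ≤ 1 + eᵃ⁺ᵇ` for `a, b ≥ 0`, and by induction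
`∑ eˣⁱ ≤ n - 1 + e^{∑ xᵢ}` for nonnegative `xᵢ`. Applied to `|λᵢ|` together with `e^{λᵢ} ≤ e^{|λᵢ|}`,
this gives the bound. The adjacency matrix has zero trace, so its eigenvalues sum to `0`; if one of
them is nonzero, another is negative, and `e^{λⱼ} < e^{|λⱼ|}` makes the inequality strict.
-/

open Finset

lemma Real.exp_add_exp_le_one_add_exp_add {a b : ℝ} (ha : 0 ≤ a) (hb : 0 ≤ b) :
    Real.exp a + Real.exp b ≤ 1 + Real.exp (a + b) := by
  have := mul_nonneg (sub_nonneg.2 (Real.one_le_exp ha)) (sub_nonneg.2 (Real.one_le_exp hb))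
  rw [Real.exp_add]
  linarith

namespace Finset

variable {ι : Type*} (s : Finset ι) (f : ι → ℝ)

lemma sum_exp_le_card_sub_one_add_exp_sum (hf : ∀ i ∈ s, 0 ≤ f i) :
    ∑ i ∈ s, Real.exp (f i) ≤ #s - 1 + Real.exp (∑ i ∈ s, f i) := by
  induction s using Finset.cons_induction with
  | empty => simp
  | cons a s _ ih =>
    rw [forall_mem_cons] at hf
    have := Real.exp_add_exp_le_one_add_exp_add hf.1 (sum_nonneg hf.2)
    rw [sum_cons, sum_cons, card_cons]
    push_cast
    linarith [ih hf.2]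

lemma sum_exp_le_card_sub_one_add_exp_sum_abs :
    ∑ i ∈ s, Real.exp (f i) ≤ #s - 1 + Real.exp (∑ i ∈ s, |f i|) :=
  (sum_le_sum fun i _ => Real.exp_le_exp.2 (le_abs_self (f i))).trans
    (sum_exp_le_card_sub_one_add_exp_sum s _ fun i _ => abs_nonneg (f i))

lemma sum_exp_eq_card_sub_one_add_exp_sum_abs_iff (hf : ∑ i ∈ s, f i = 0) :
    ∑ i ∈ s, Real.exp (f i) = #s - 1 + Real.exp (∑ i ∈ s, |f i|) ↔ ∀ i ∈ s, f i = 0 := by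
  constructor
  · intro heq
    by_contra! hne
    obtain ⟨i, hi, hfi⟩ := hne
    obtain ⟨j, hj, hneg⟩ : ∃ j ∈ s, f j < 0 := by
      by_contra! hnonneg
      exact hfi ((sum_eq_zero_iff_of_nonneg hnonneg).1 hf i hi)
    have hlt : ∑ i ∈ s, Real.exp (f i) < ∑ i ∈ s, Real.exp |f i| :=
      sum_lt_sum (fun i _ => Real.exp_le_exp.2 (le_abs_self (f i)))
        ⟨j, hj, Real.exp_lt_exp.2 (by rw [abs_of_neg hneg]; linarith)⟩
    linarith [sum_exp_le_card_sub_one_add_exp_sum s (fun i => |f i|) fun i _ => abs_nonneg (f i)]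
  · intro h
    have hexp : ∑ i ∈ s, Real.exp (f i) = #s := by
      rw [sum_congr rfl fun i hi => by rw [h i hi, Real.exp_zero]]
      simp
    have habs : ∑ i ∈ s, |f i| = 0 := sum_eq_zero fun i hi => by rw [h i hi, abs_zero]
    rw [hexp, habs, Real.exp_zero]
    ring

end Finset

section Hypergraph

variable {V : Type*} [Fintype V] [DecidableEq V] (E : Finset (Finset V))

lemma trace_adjMatrix : (adjMatrix E).trace = 0 := by
  simp [Matrix.trace, adjMatrix]

lemma sum_eigenvalues_adjMatrix : ∑ i, (adjMatrix_isHermitian E).eigenvalues i = 0 := by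
  simpa [trace_adjMatrix] using ((adjMatrix_isHermitian E).trace_eq_sum_eigenvalues).symm

lemma adjMatrix_eq_zero_iff {E : Finset (Finset V)} (hE : ∀ e ∈ E, 1 < e.card) :
    adjMatrix E = 0 ↔ E = ∅ := by
  constructor
  · intro h
    by_contra! hne
    obtain ⟨e, he⟩ := hne
    obtain ⟨i, hi⟩ := card_pos.1 (zero_lt_one.trans (hE e he))
    obtain ⟨j, hj, hji⟩ := exists_mem_ne (hE e he) i
    have hij : adjMatrix E i j = 0 := by rw [h, Matrix.zero_apply]
    rw [adjMatrix, if_neg hji.symm, Nat.cast_eq_zero, card_eq_zero] at hij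
    exact notMem_empty e (hij ▸ mem_filter.2 ⟨he, hi, hj⟩)
  · rintro rfl
    ext i j
    simp [adjMatrix]

lemma estradaIndex_le_card_sub_one_add_exp_energy :
    estradaIndex E ≤ Fintype.card V - 1 + Real.exp (energy E) :=
  sum_exp_le_card_sub_one_add_exp_sum_abs univ _

lemma estradaIndex_eq_card_sub_one_add_exp_energy_iff :
    estradaIndex E = Fintype.card V - 1 + Real.exp (energy E) ↔ adjMatrix E = 0 := by
  rw [estradaIndex, energy, ← card_univ,
    sum_exp_eq_card_sub_one_add_exp_sum_abs_iff univ _ (sum_eigenvalues_adjMatrix E),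
    ← (adjMatrix_isHermitian E).eigenvalues_eq_zero_iff, funext_iff]
  simp

end Hypergraph

/-- For a `k`-uniform hypergraph `G` with `n` vertices and energy `E(G)`,
`EE(G) ≤ n - 1 + e^{E(G)}`, with equality iff `G` is edgeless. -/
theorem stmt_8 (n k : ℕ) (hk : 2 ≤ k)
    (E : Finset (Finset (Fin n))) (hunif : ∀ e ∈ E, e.card = k) :
    estradaIndex E ≤ (n : ℝ) - 1 + Real.exp (energy E) ∧
      (estradaIndex E = (n : ℝ) - 1 + Real.exp (energy E) ↔ E = ∅) := by
  have hcard : (Fintype.card (Fin n) : ℝ) = n := by simp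
  rw [← hcard, estradaIndex_eq_card_sub_one_add_exp_energy_iff,
    adjMatrix_eq_zero_iff fun e he => (hunif e he).symm ▸ hk]
  exact ⟨estradaIndex_le_card_sub_one_add_exp_energy E, Iff.rfl⟩
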